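/- Let I_s : (−1,1) → ℝ be the function I_s(δ) = ∫₀¹ sin(2πw)(1 − δ sin(2πw))^{−3/2} dw. Suppose r₁, r₂, z : [0, T) → ℝ are differentiable with r₁(t) > 0 and r₂(t) > 0, and satisfy the ODE system r₁'(t) = −2π r₂ z I_s(δ) / ρ³ and r₂'(t) = 2π r₁ z I_s(δ) / ρ³, where ρ = √(r₁² + r₂² + z²) and δ = 2 r₁ r₂ / ρ². Then t ↦ r₁(t)² + r₂(t)² is constant on [0, T); equivalently, the total enclosed area π r₁(t)² + π r₂(t)² of the two evolving coaxial circles is conserved. -/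

import Mathlib

noncomputable section

open Real

/-- The parametric integral `I_s(δ)`. -/
def Is (δ : ℝ) : ℝ :=
  ∫ w in (0:ℝ)..1, Real.sin (2 * π * w) / (1 - δ * Real.sin (2 * π * w)) ^ ((3:ℝ)/2)

/-!
Write `ω = 2π z I_s(δ) / ρ³`. The system reads `r₁' = -ω r₂`, `r₂' = ω r₁`: an instantaneous
rotation of the vector `(r₁, r₂)` with angular velocity `ω`, whatever `ω` is. Hence
`(r₁² + r₂²)' = 2 r₁ (-ω r₂) + 2 r₂ (ω r₁) = 0`, and a function with vanishing derivative on the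
interval `[0, T)` is constant there by the mean value inequality.
-/

theorem Convex.is_const_of_hasDerivWithinAt_zero {𝕜 G : Type*} [RCLike 𝕜]
    [NormedAddCommGroup G] [NormedSpace 𝕜 G] {f : 𝕜 → G} {s : Set 𝕜} (hs : Convex ℝ s)
    (hf : ∀ x ∈ s, HasDerivWithinAt f 0 s x) {x y : 𝕜} (hx : x ∈ s) (hy : y ∈ s) :
    f x = f y := by
  have h := hs.norm_image_sub_le_of_norm_hasDerivWithin_le hf (fun _ _ => norm_zero.le) hx hy
  rw [zero_mul, norm_le_zero_iff, sub_eq_zero] at h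
  exact h.symm

theorem HasDerivWithinAt.sq_add_sq_of_rotation {f g : ℝ → ℝ} {ω : ℝ} {s : Set ℝ} {t : ℝ}
    (hf : HasDerivWithinAt f (-(ω * g t)) s t) (hg : HasDerivWithinAt g (ω * f t) s t) :
    HasDerivWithinAt (fun u => f u ^ 2 + g u ^ 2) 0 s t :=
  ((hf.fun_pow 2).fun_add (hg.fun_pow 2)).congr_deriv (by push_cast; ring)

theorem Convex.sq_add_sq_eq_of_rotation {f g ω : ℝ → ℝ} {s : Set ℝ} (hs : Convex ℝ s)
    (hf : ∀ t ∈ s, HasDerivWithinAt f (-(ω t * g t)) s t)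
    (hg : ∀ t ∈ s, HasDerivWithinAt g (ω t * f t) s t) {a b : ℝ} (ha : a ∈ s) (hb : b ∈ s) :
    f b ^ 2 + g b ^ 2 = f a ^ 2 + g a ^ 2 :=
  hs.is_const_of_hasDerivWithinAt_zero
    (fun t ht => (hf t ht).sq_add_sq_of_rotation (hg t ht)) hb ha

theorem two_circles_area_conservation_general
    (T : ℝ) (r₁ r₂ z : ℝ → ℝ)
    (hr₁ : ∀ t ∈ Set.Ico (0:ℝ) T,
      HasDerivWithinAt r₁
        (-(2 * π * r₂ t * z t * Is (2 * r₁ t * r₂ t / Real.sqrt (r₁ t ^ 2 + r₂ t ^ 2 + z t ^ 2) ^ 2))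
          / Real.sqrt (r₁ t ^ 2 + r₂ t ^ 2 + z t ^ 2) ^ 3)
        (Set.Ico (0:ℝ) T) t)
    (hr₂ : ∀ t ∈ Set.Ico (0:ℝ) T,
      HasDerivWithinAt r₂
        ((2 * π * r₁ t * z t * Is (2 * r₁ t * r₂ t / Real.sqrt (r₁ t ^ 2 + r₂ t ^ 2 + z t ^ 2) ^ 2))
          / Real.sqrt (r₁ t ^ 2 + r₂ t ^ 2 + z t ^ 2) ^ 3)
        (Set.Ico (0:ℝ) T) t) :
    ∀ t ∈ Set.Ico (0:ℝ) T,
      r₁ t ^ 2 + r₂ t ^ 2 = r₁ 0 ^ 2 + r₂ 0 ^ 2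
      ∧ π * r₁ t ^ 2 + π * r₂ t ^ 2 = π * r₁ 0 ^ 2 + π * r₂ 0 ^ 2 := by
  intro t ht
  have hsum : r₁ t ^ 2 + r₂ t ^ 2 = r₁ 0 ^ 2 + r₂ 0 ^ 2 :=
    (convex_Ico 0 T).sq_add_sq_eq_of_rotation
      (ω := fun s => 2 * π * z s *
        Is (2 * r₁ s * r₂ s / Real.sqrt (r₁ s ^ 2 + r₂ s ^ 2 + z s ^ 2) ^ 2) /
          Real.sqrt (r₁ s ^ 2 + r₂ s ^ 2 + z s ^ 2) ^ 3)
      (fun s hs => (hr₁ s hs).congr_deriv (by ring))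
      (fun s hs => (hr₂ s hs).congr_deriv (by ring))
      ⟨le_rfl, ht.1.trans_lt ht.2⟩ ht
  exact ⟨hsum, by linear_combination π * hsum⟩

theorem two_circles_area_conservation
    (T : ℝ) (r₁ r₂ z : ℝ → ℝ)
    (hr₁pos : ∀ t ∈ Set.Ico (0:ℝ) T, 0 < r₁ t)
    (hr₂pos : ∀ t ∈ Set.Ico (0:ℝ) T, 0 < r₂ t)
    (hr₁ : ∀ t ∈ Set.Ico (0:ℝ) T,
      HasDerivWithinAt r₁
        (-(2 * π * r₂ t * z t * Is (2 * r₁ t * r₂ t / Real.sqrt (r₁ t ^ 2 + r₂ t ^ 2 + z t ^ 2) ^ 2))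
          / Real.sqrt (r₁ t ^ 2 + r₂ t ^ 2 + z t ^ 2) ^ 3)
        (Set.Ico (0:ℝ) T) t)
    (hr₂ : ∀ t ∈ Set.Ico (0:ℝ) T,
      HasDerivWithinAt r₂
        ((2 * π * r₁ t * z t * Is (2 * r₁ t * r₂ t / Real.sqrt (r₁ t ^ 2 + r₂ t ^ 2 + z t ^ 2) ^ 2))
          / Real.sqrt (r₁ t ^ 2 + r₂ t ^ 2 + z t ^ 2) ^ 3)
        (Set.Ico (0:ℝ) T) t)
    (hz : ∀ t ∈ Set.Ico (0:ℝ) T, DifferentiableWithinAt ℝ z (Set.Ico (0:ℝ) T) t) :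
    ∀ t ∈ Set.Ico (0:ℝ) T,
      r₁ t ^ 2 + r₂ t ^ 2 = r₁ 0 ^ 2 + r₂ 0 ^ 2
      ∧ π * r₁ t ^ 2 + π * r₂ t ^ 2 = π * r₁ 0 ^ 2 + π * r₂ 0 ^ 2 :=
  two_circles_area_conservation_general T r₁ r₂ z hr₁ hr₂
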